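/- Fix M ≻ 0 and v ∈ ℝ₊₊^N, with polar decomposition M^{1/2} D_v^{1/2} = U P. For all w ∈ ℝ₊₊^N, J(w) := 2 Tr((D_w^{1/2} M D_w^{1/2})^{1/2}) - Σᵢ wᵢ satisfies J(w) ≥ G(w) := 2 Tr(Uᵀ M^{1/2} D_w^{1/2}) - Σᵢ wᵢ, with equality at w = v. -/

import Mathlib

open Matrix Real Filter

noncomputable def msqrt {N : ℕ} (A : Matrix (Fin N) (Fin N) ℝ) : Matrix (Fin N) (Fin N) ℝ :=
  letI := Classical.dec A.PosSemidef
  if h : A.PosSemidef then (h.1.eigenvectorUnitary : Matrix (Fin N) (Fin N) ℝ) *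
    diagonal ((↑) ∘ (√·) ∘ h.1.eigenvalues) * (star h.1.eigenvectorUnitary : Matrix (Fin N) (Fin N) ℝ) else 0

noncomputable def dhalf {N : ℕ} (v : Fin N → ℝ) : Matrix (Fin N) (Fin N) ℝ :=
  Matrix.diagonal fun i => Real.sqrt (v i)

noncomputable def Matrix.PosSemidef.sqrt {N : ℕ} {A : Matrix (Fin N) (Fin N) ℝ} (h : A.PosSemidef) :
    Matrix (Fin N) (Fin N) ℝ :=
  (h.1.eigenvectorUnitary : Matrix (Fin N) (Fin N) ℝ) *
    diagonal ((↑) ∘ (√·) ∘ h.1.eigenvalues) * (star h.1.eigenvectorUnitary : Matrix (Fin N) (Fin N) ℝ)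

lemma Matrix.PosSemidef.posSemidef_sqrt {N : ℕ} {A : Matrix (Fin N) (Fin N) ℝ} (h : A.PosSemidef) :
    h.sqrt.PosSemidef := by
  unfold Matrix.PosSemidef.sqrt
  have := (PosSemidef.diagonal (d := ((↑) ∘ (√·) ∘ h.1.eigenvalues : Fin N → ℝ))
    (fun i => by simp [Real.sqrt_nonneg])).mul_mul_conjTranspose_same
    (h.1.eigenvectorUnitary : Matrix (Fin N) (Fin N) ℝ)
  simpa [Matrix.star_eq_conjTranspose] using this

lemma Matrix.PosSemidef.sqrt_mul_self {N : ℕ} {A : Matrix (Fin N) (Fin N) ℝ} (h : A.PosSemidef) :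
    h.sqrt * h.sqrt = A := by
  unfold Matrix.PosSemidef.sqrt
  have hu : (star h.1.eigenvectorUnitary : Matrix (Fin N) (Fin N) ℝ) *
      (h.1.eigenvectorUnitary : Matrix (Fin N) (Fin N) ℝ) = 1 := by
    rw [← Matrix.UnitaryGroup.star_mul_self]
  have hd : diagonal ((↑) ∘ (√·) ∘ h.1.eigenvalues : Fin N → ℝ) *
      diagonal ((↑) ∘ (√·) ∘ h.1.eigenvalues : Fin N → ℝ) =
      diagonal (RCLike.ofReal ∘ h.1.eigenvalues) := by
    rw [diagonal_mul_diagonal]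
    congr 1; funext i
    simp [Real.mul_self_sqrt (h.eigenvalues_nonneg i)]
  conv_rhs => rw [h.1.spectral_theorem]
  rw [Unitary.conjStarAlgAut_apply]
  simp only [Matrix.mul_assoc]
  rw [← Matrix.mul_assoc (star _ : Matrix (Fin N) (Fin N) ℝ) _ _, hu, Matrix.one_mul,
    ← Matrix.mul_assoc (diagonal _) (diagonal _), hd]

lemma msqrt_of_psd {N : ℕ} {A : Matrix (Fin N) (Fin N) ℝ} (h : A.PosSemidef) :
    msqrt A = h.sqrt := by
  rw [msqrt]
  exact dif_pos h

-- key: for real orthogonal W and psd P, trace (W * P) ≤ trace P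
lemma trace_orth_mul_le {N : ℕ} (W P : Matrix (Fin N) (Fin N) ℝ)
    (hW : Wᵀ * W = 1) (hP : P.PosSemidef) : (W * P).trace ≤ P.trace := by
  set Q := hP.sqrt with hQdef
  have hQ : Q.PosSemidef := hP.posSemidef_sqrt
  have hQsym : Qᵀ = Q := hQ.1
  have hQe : ∀ a b, Q a b = Q b a := by
    intro a b
    conv_lhs => rw [← hQsym]
    rfl
  have hQQ : Q * Q = P := hP.sqrt_mul_self
  have hcyc : (W * P).trace = (Q * (W * Q)).trace := by
    rw [← hQQ, ← Matrix.mul_assoc, Matrix.trace_mul_comm]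
  rw [hcyc]
  have hWQ : (W * Q)ᵀ * (W * Q) = P := by
    rw [Matrix.transpose_mul, Matrix.mul_assoc, ← Matrix.mul_assoc Wᵀ, hW, Matrix.one_mul,
      hQsym, hQQ]
  rw [Matrix.trace, Matrix.trace]
  apply Finset.sum_le_sum
  intro i _
  have hdiag1 : ∑ j, (Q j i)^2 = P i i := by
    calc ∑ j, (Q j i)^2 = (Qᵀ * Q) i i := by
          simp [Matrix.mul_apply, Matrix.transpose_apply, sq]
      _ = P i i := by rw [hQsym, hQQ]
  have hdiag2 : ∑ j, ((W * Q) j i)^2 = P i i := by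
    calc ∑ j, ((W * Q) j i)^2 = ((W * Q)ᵀ * (W * Q)) i i := by
          simp [Matrix.mul_apply, Matrix.transpose_apply, sq, mul_comm]
      _ = P i i := by rw [hWQ]
  have hPii : 0 ≤ P i i := by
    rw [← hdiag1]
    positivity
  have hent : (Q * (W * Q)).diag i = ∑ j, Q j i * (W * Q) j i := by
    simp only [Matrix.diag_apply, Matrix.mul_apply]
    refine Finset.sum_congr rfl fun j _ => ?_
    rw [hQe i j]
  have hcs := Finset.sum_mul_sq_le_sq_mul_sq Finset.univ (fun j => Q j i)
    (fun j => (W * Q) j i)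
  rw [hdiag1, hdiag2] at hcs
  calc (Q * (W * Q)).diag i = ∑ j, Q j i * (W * Q) j i := hent
    _ ≤ |∑ j, Q j i * (W * Q) j i| := le_abs_self _
    _ = Real.sqrt ((∑ j, Q j i * (W * Q) j i)^2) := (Real.sqrt_sq_eq_abs _).symm
    _ ≤ Real.sqrt (P i i * P i i) := Real.sqrt_le_sqrt hcs
    _ = P i i := by rw [← sq, Real.sqrt_sq hPii]

theorem stmt_16 {N : ℕ} (M : Matrix (Fin N) (Fin N) ℝ) (hM : M.PosDef)
    (v : Fin N → ℝ) (hv : ∀ i, 0 < v i)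
    (U : Matrix (Fin N) (Fin N) ℝ) (hU : Uᵀ * U = 1)
    (hpolar : msqrt M * dhalf v =
      U * msqrt ((msqrt M * dhalf v)ᵀ * (msqrt M * dhalf v))) :
    (∀ w : Fin N → ℝ, (∀ i, 0 < w i) →
      2 * (Uᵀ * msqrt M * dhalf w).trace - ∑ i, w i ≤
        2 * (msqrt (dhalf w * M * dhalf w)).trace - ∑ i, w i) ∧
    2 * (Uᵀ * msqrt M * dhalf v).trace - ∑ i, v i =
      2 * (msqrt (dhalf v * M * dhalf v)).trace - ∑ i, v i := by
  have hMpsd := hM.posSemidef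
  set S := msqrt M with hSdef
  have hSeq : S = hMpsd.sqrt := msqrt_of_psd hMpsd
  have hSpsd : S.PosSemidef := hSeq ▸ hMpsd.posSemidef_sqrt
  have hSsym : Sᵀ = S := hSpsd.1
  have hSS : S * S = M := hSeq ▸ hMpsd.sqrt_mul_self
  have hDsym : ∀ w : Fin N → ℝ, (dhalf w)ᵀ = dhalf w := fun w => Matrix.diagonal_transpose _
  have hDconj : ∀ w : Fin N → ℝ, (dhalf w)ᴴ = dhalf w := fun w => by
    rw [Matrix.conjTranspose_eq_transpose_of_trivial, hDsym]
  have hAtA : ∀ w : Fin N → ℝ, (S * dhalf w)ᵀ * (S * dhalf w) = dhalf w * M * dhalf w := by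
    intro w
    rw [Matrix.transpose_mul, hDsym, hSsym, Matrix.mul_assoc, ← Matrix.mul_assoc S, hSS,
      ← Matrix.mul_assoc]
  have hDMD : ∀ w : Fin N → ℝ, (dhalf w * M * dhalf w).PosSemidef := by
    intro w
    have := hMpsd.conjTranspose_mul_mul_same (dhalf w)
    rwa [hDconj] at this
  have main : ∀ w : Fin N → ℝ, (∀ i, 0 < w i) →
      (Uᵀ * S * dhalf w).trace ≤ (msqrt (dhalf w * M * dhalf w)).trace := by
    intro w hw
    set A := S * dhalf w with hAdef
    set P := msqrt (dhalf w * M * dhalf w) with hPdef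
    have hPeq : P = (hDMD w).sqrt := msqrt_of_psd _
    have hPpsd : P.PosSemidef := hPeq ▸ (hDMD w).posSemidef_sqrt
    have hPsym : Pᵀ = P := hPpsd.1
    have hPP : P * P = dhalf w * M * dhalf w := hPeq ▸ (hDMD w).sqrt_mul_self
    have hAA : Aᵀ * A = P * P := by
      rw [hAdef, hAtA w, hPP]
    -- invertibility
    have hdetM : (0:ℝ) < M.det := hM.det_pos
    have hdetS : IsUnit S.det := by
      have h2 : S.det * S.det = M.det := by rw [← Matrix.det_mul, hSS]
      refine isUnit_iff_ne_zero.mpr fun h => ?_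
      rw [h, mul_zero] at h2
      exact hdetM.ne' h2.symm
    have hdetD : IsUnit (dhalf w).det := by
      rw [dhalf, Matrix.det_diagonal]
      exact isUnit_iff_ne_zero.mpr (Finset.prod_ne_zero_iff.mpr fun i _ =>
        ne_of_gt (Real.sqrt_pos.mpr (hw i)))
    have hdetA : IsUnit A.det := by
      rw [hAdef, Matrix.det_mul]; exact hdetS.mul hdetD
    have hdetP : IsUnit P.det := by
      have h2 : P.det * P.det = Aᵀ.det * A.det := by
        rw [← Matrix.det_mul, ← Matrix.det_mul, ← hAA]
      rw [Matrix.det_transpose] at h2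
      refine isUnit_iff_ne_zero.mpr fun h => ?_
      rw [h, mul_zero] at h2
      exact (hdetA.mul hdetA).ne_zero h2.symm
    set W := Uᵀ * A * P⁻¹ with hWdef
    have hPinvsym : (P⁻¹)ᵀ = P⁻¹ := by
      rw [Matrix.transpose_nonsing_inv, hPsym]
    have hUUt : U * Uᵀ = 1 := mul_eq_one_comm.mp hU
    have hWW : Wᵀ * W = 1 := by
      rw [hWdef, Matrix.transpose_mul, Matrix.transpose_mul, Matrix.transpose_transpose,
        hPinvsym]
      simp only [Matrix.mul_assoc]
      rw [← Matrix.mul_assoc U Uᵀ, hUUt, Matrix.one_mul, ← Matrix.mul_assoc Aᵀ A, hAA,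
        Matrix.mul_assoc P P, Matrix.mul_nonsing_inv _ hdetP, Matrix.mul_one,
        Matrix.nonsing_inv_mul _ hdetP]
    have hWP : W * P = Uᵀ * A := by
      rw [hWdef, Matrix.mul_assoc, Matrix.nonsing_inv_mul _ hdetP, Matrix.mul_one]
    have hineq := trace_orth_mul_le W P hWW hPpsd
    rw [hWP, hAdef] at hineq
    rwa [Matrix.mul_assoc]
  constructor
  · intro w hw
    have := main w hw
    linarith
  · have hAv : S * dhalf v = U * msqrt (dhalf v * M * dhalf v) := by
      rw [← hAtA v]; exact hpolar
    have h1 : Uᵀ * S * dhalf v = msqrt (dhalf v * M * dhalf v) := by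
      rw [Matrix.mul_assoc, hAv, ← Matrix.mul_assoc, hU, Matrix.one_mul]
    rw [h1]
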